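/- The shifted double Schur functions for one-row partitions agree with shifted complete homogeneous functions: $^n s^*_{(p)}(x_1,\dots,x_n|y) = h_p(x_1+y_{-1},\dots,x_n+y_{-n}\,|\,\tau^{n+1}y)$ for all $p \geq 0$. -/

import Mathlib

open Finset

/-- Generalized factorial power `(x|y)^p = ∏_{j=1}^p (x - y_j)`
for a doubly infinite sequence `y`. -/
def gfp {R : Type*} [CommRing R] (y : ℤ → R) (x : R) (p : ℕ) : R :=
  ∏ j ∈ Finset.range p, (x - y ((j : ℤ) + 1))

/-- Numerator determinant `det [(x_i|y)^{λ_j + n - j}]` (indices `i j : Fin n`, zero-based,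
so the 1-based exponent `λ_j + n - j` becomes `λ_j + n - (j+1)`). -/
def dnum {R : Type*} [CommRing R] (n : ℕ) (x : Fin n → R) (y : ℤ → R) (l : Fin n → ℕ) : R :=
  Matrix.det (Matrix.of fun i j : Fin n => gfp y (x i) (l j + n - ((j : ℕ) + 1)))

/-- Denominator determinant `det [(x_i|y)^{n-j}]`. -/
def dden {R : Type*} [CommRing R] (n : ℕ) (x : Fin n → R) (y : ℤ → R) : R :=
  dnum n x y fun _ => 0

/-- The double complete homogeneous function
`h_p(x_1,…,x_m|y) = ∑_{1 ≤ i_1 ≤ … ≤ i_p ≤ m} ∏_{j=1}^p (x_{i_j} - y_{i_j + j - 1})`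
(zero-based indexing of the variables and of `j`). -/
def dh {R : Type*} [CommRing R] (m p : ℕ) (x : Fin m → R) (y : ℤ → R) : R :=
  ∑ f ∈ Finset.univ.filter (fun f : Fin p → Fin m => ∀ a b : Fin p, a ≤ b → f a ≤ f b),
    ∏ j : Fin p, (x (f j) - y (((f j : ℕ) : ℤ) + ((j : ℕ) : ℤ) + 1))

/-- `h_p` extended to integer `p`, with `h_p = 0` for `p < 0`. -/
def dhZ {R : Type*} [CommRing R] (m : ℕ) (p : ℤ) (x : Fin m → R) (y : ℤ → R) : R :=
  if 0 ≤ p then dh m p.toNat x y else 0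

/-!
Subtracting the last row from the others and expanding along the last column (the constant
factorial power `(x|y)^0 = 1`) reduces the `n`-variable determinant with first column
`(x|y)^{p+n-1}` to `∏ (x_i - x_n)` times an `(n-1)`-variable determinant whose columns are the
divided differences of the factorial powers at `x_n`. Column operations turn the divided
differences of `(x|y)^{n-j}` back into factorial powers `(x|y)^{n-1-j}`, while the divided
difference of `(x|y)^{p+n-1}` expands as a combination of factorial powers in which, by
multilinearity, only `(x|y)^{n-2+q}`, `q ≤ p`, survive. Their coefficients are those of the
expansion of `h_p` along its last variable, so the claim follows by induction on `n`.
-/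

namespace Matrix

variable {R : Type*} [CommRing R]

theorem det_eq_of_forall_col_eq_smul_add_succ {n : ℕ}
    {A B : Matrix (Fin (n + 1)) (Fin (n + 1)) R} (c : Fin n → R)
    (A_last : ∀ i, A i (Fin.last n) = B i (Fin.last n))
    (A_castSucc : ∀ i (j : Fin n), A i j.castSucc = B i j.castSucc + c j * A i j.succ) :
    det A = det B := by
  rw [← det_submatrix_equiv_self Fin.revPerm A, ← det_submatrix_equiv_self Fin.revPerm B]
  refine det_eq_of_forall_col_eq_smul_add_pred (c ∘ Fin.rev) (fun i => ?_) (fun i j => ?_)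
  · simpa using A_last (Fin.rev i)
  · simpa [Fin.rev_succ, Fin.rev_castSucc] using A_castSucc (Fin.rev i) (Fin.rev j)

theorem det_updateCol_sum_smul {n ι : Type*} [Fintype n] [DecidableEq n] (M : Matrix n n R)
    (j : n) (s : Finset ι) (c : ι → R) (v : ι → n → R) :
    det (M.updateCol j (∑ k ∈ s, c k • v k)) = ∑ k ∈ s, c k * det (M.updateCol j (v k)) := by
  induction s using Finset.cons_induction with
  | empty => exact det_eq_zero_of_column_eq_zero j fun i => by simp
  | cons a s ha ih => rw [sum_cons, det_updateCol_add, det_updateCol_smul, ih, sum_cons]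

theorem det_eq_prod_sub_mul_det_divDiff {n : ℕ} (z : Fin (n + 1) → R)
    (f : Fin (n + 1) → R → R) (d : Fin n → R → R) (hf : ∀ a, f (Fin.last n) a = 1)
    (hd : ∀ j a,
      f j.castSucc a - f j.castSucc (z (Fin.last n)) = (a - z (Fin.last n)) * d j a) :
    det (of fun i j => f j (z i)) =
      (∏ i, (Fin.init z i - z (Fin.last n))) * det (of fun i j => d j (Fin.init z i)) := by
  let B : Matrix (Fin (n + 1)) (Fin (n + 1)) R := of fun i j =>
    if i = Fin.last n then f j (z i) else f j (z i) - f j (z (Fin.last n))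
  have hB : det (of fun i j => f j (z i)) = det B := by
    refine det_eq_of_forall_row_eq_smul_add_const (fun i => if i = Fin.last n then 0 else 1)
      (Fin.last n) (by simp) fun i j => ?_
    by_cases hi : i = Fin.last n <;> simp [B, hi]
  have hminor : B.submatrix Fin.castSucc Fin.castSucc =
      of fun i j => (Fin.init z i - z (Fin.last n)) * d j (Fin.init z i) := by
    ext i j
    simp [B, hd, Fin.init, (Fin.castSucc_lt_last i).ne]
  rw [hB, det_succ_column B (Fin.last n), sum_eq_single (Fin.last n)]
  · simp only [B, of_apply, if_pos, hf, Fin.succAbove_last, hminor]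
    rw [Even.neg_one_pow ⟨_, rfl⟩, one_mul, one_mul]
    exact det_mul_column _ (of fun i j => d j (Fin.init z i))
  · intro i _ hi
    simp [B, hi, hf]
  · simp

end Matrix

section

open Matrix

variable {R : Type*} [CommRing R]

@[simp]
lemma gfp_zero (w : ℤ → R) (a : R) : gfp w a 0 = 1 := by
  simp [gfp]

lemma gfp_succ (w : ℤ → R) (a : R) (m : ℕ) :
    gfp w a (m + 1) = gfp w a m * (a - w (m + 1)) := by
  simp [gfp, prod_range_succ]

/-- The divided difference `((a|w)^m - (b|w)^m) / (a - b)`, see `gfp_sub_gfp`. -/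
def gfpDivDiff (w : ℤ → R) (b : R) : ℕ → R → R
  | 0, _ => 0
  | m + 1, a => gfp w a m + (b - w (m + 1)) * gfpDivDiff w b m a

lemma gfp_sub_gfp (w : ℤ → R) (a b : R) (m : ℕ) :
    gfp w a m - gfp w b m = (a - b) * gfpDivDiff w b m a := by
  induction m with
  | zero => simp [gfpDivDiff]
  | succ m ih =>
    rw [gfp_succ, gfp_succ, gfpDivDiff]
    linear_combination (b - w (m + 1)) * ih

lemma gfpDivDiff_eq_sum (w : ℤ → R) (a b : R) (m : ℕ) :
    gfpDivDiff w b m a =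
      ∑ k ∈ range m, gfp (fun t => w (t + (k + 1 : ℕ))) b (m - 1 - k) * gfp w a k := by
  induction m with
  | zero => simp [gfpDivDiff]
  | succ m ih =>
    rw [gfpDivDiff, ih, sum_range_succ, mul_sum, add_comm]
    congr 1
    · refine sum_congr rfl fun k hk => ?_
      obtain ⟨l, rfl⟩ := Nat.exists_eq_add_of_lt (mem_range.1 hk)
      have hindex : ((l : ℕ) : ℤ) + 1 + ((k + 1 : ℕ) : ℤ) = ((k + l + 1 : ℕ) : ℤ) + 1 := by
        push_cast
        ring
      rw [show k + l + 1 + 1 - 1 - k = l + 1 by omega, gfp_succ,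
        show k + l + 1 - 1 - k = l by omega, hindex]
      ring
    · simp

lemma dh_zero_right (m : ℕ) (z : Fin m → R) (w : ℤ → R) : dh m 0 z w = 1 := by
  simp [dh]

lemma dh_zero_succ (p : ℕ) (z : Fin 0 → R) (w : ℤ → R) : dh 0 (p + 1) z w = 0 := by
  simp [dh]

lemma dh_sum_filter_last_ne (n p : ℕ) (z : Fin (n + 1) → R) (w : ℤ → R) :
    ∑ f ∈ (univ.filter fun f : Fin (p + 1) → Fin (n + 1) =>
        ∀ a b, a ≤ b → f a ≤ f b).filter (fun f => ¬f (Fin.last p) = Fin.last n),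
      ∏ j, (z (f j) - w ((f j : ℕ) + (j : ℕ) + 1)) = dh n (p + 1) (Fin.init z) w := by
  refine (sum_bij' (fun g _ => Fin.castSucc ∘ g)
    (fun f hf a => (f a).castPred fun h => ?_) ?_ ?_ ?_ ?_ ?_).symm
  · simp only [mem_filter, mem_univ, true_and] at hf
    exact hf.2 (le_antisymm (Fin.le_last _) (h ▸ hf.1 a _ (Fin.le_last a)))
  · intro g hg
    simp only [mem_filter, mem_univ, true_and] at hg ⊢
    exact ⟨fun a b hab => Fin.castSucc_le_castSucc_iff.2 (hg a b hab),
      (Fin.castSucc_lt_last _).ne⟩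
  · intro f hf
    simp only [mem_filter, mem_univ, true_and] at hf ⊢
    exact fun a b hab => Fin.castPred_le_castPred_iff.2 (hf.1 a b hab)
  · exact fun g _ => rfl
  · exact fun f _ => funext fun a => Fin.castSucc_castPred _ _
  · exact fun g _ => rfl

lemma dh_sum_filter_last_eq (n p : ℕ) (z : Fin (n + 1) → R) (w : ℤ → R) :
    ∑ f ∈ (univ.filter fun f : Fin (p + 1) → Fin (n + 1) =>
        ∀ a b, a ≤ b → f a ≤ f b).filter (fun f => f (Fin.last p) = Fin.last n),
      ∏ j, (z (f j) - w ((f j : ℕ) + (j : ℕ) + 1)) =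
      (z (Fin.last n) - w (n + p + 1)) * dh (n + 1) p z w := by
  rw [dh, mul_sum]
  refine sum_bij' (fun f _ => Fin.init f) (fun g _ => Fin.snoc g (Fin.last n)) ?_ ?_ ?_ ?_ ?_
  · intro f hf
    simp only [mem_filter, mem_univ, true_and] at hf ⊢
    exact fun a b hab => hf.1 _ _ (Fin.castSucc_le_castSucc_iff.2 hab)
  · intro g hg
    simp only [mem_filter, mem_univ, true_and] at hg ⊢
    refine ⟨fun a b hab => ?_, Fin.snoc_last _ _⟩
    induction b using Fin.lastCases with
    | last => rw [Fin.snoc_last]; exact Fin.le_last _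
    | cast b =>
      induction a using Fin.lastCases with
      | last => exact absurd hab (not_le.2 (Fin.castSucc_lt_last b))
      | cast a => simpa using hg a b (Fin.castSucc_le_castSucc_iff.1 hab)
  · intro f hf
    rw [← (mem_filter.1 hf).2]
    exact Fin.snoc_init_self f
  · exact fun g _ => Fin.init_snoc _ _
  · intro f hf
    rw [Fin.prod_univ_castSucc, (mem_filter.1 hf).2, mul_comm]
    simp [Fin.init]

lemma dh_succ_succ (n p : ℕ) (z : Fin (n + 1) → R) (w : ℤ → R) :
    dh (n + 1) (p + 1) z w =
      dh n (p + 1) (Fin.init z) w + (z (Fin.last n) - w (n + p + 1)) * dh (n + 1) p z w := by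
  rw [dh, ← sum_filter_add_sum_filter_not _ (fun f => f (Fin.last p) = Fin.last n),
    dh_sum_filter_last_eq, dh_sum_filter_last_ne, add_comm]

lemma dh_one_left (p : ℕ) (z : Fin 1 → R) (w : ℤ → R) : dh 1 p z w = gfp w (z 0) p := by
  induction p with
  | zero => rw [dh_zero_right, gfp_zero]
  | succ p ih =>
    rw [dh_succ_succ, dh_zero_succ, ih, gfp_succ]
    simp [mul_comm]

lemma dh_succ_eq_sum (m p : ℕ) (z : Fin (m + 1) → R) (w : ℤ → R) :
    dh (m + 1) p z w = ∑ q ∈ range (p + 1),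
      gfp (fun t => w (t + (m + q : ℕ))) (z (Fin.last m)) (p - q) * dh m q (Fin.init z) w := by
  induction p with
  | zero => simp [dh_zero_right]
  | succ p ih =>
    rw [dh_succ_succ, ih, sum_range_succ _ (p + 1), Nat.sub_self, gfp_zero, one_mul, add_comm,
      mul_sum]
    congr 1
    refine sum_congr rfl fun q hq => ?_
    have hqp := mem_range.1 hq
    have hindex : ((p - q : ℕ) : ℤ) + 1 + (m + q : ℕ) = m + p + 1 := by
      push_cast
      omega
    rw [show p + 1 - q = p - q + 1 by omega, gfp_succ, hindex]
    ring

def gfpMatrix (n : ℕ) (w : ℤ → R) (z : Fin n → R) : Matrix (Fin n) (Fin n) R :=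
  of fun i j => gfp w (z i) (n - (j + 1))

lemma dden_eq_det_gfpMatrix (n : ℕ) (z : Fin n → R) (w : ℤ → R) :
    dden n z w = det (gfpMatrix n w z) := by
  simp [dden, dnum, gfpMatrix]

lemma dnum_oneRow_eq_det_gfpMatrix_updateCol (n p : ℕ) (z : Fin (n + 1) → R) (w : ℤ → R) :
    dnum (n + 1) z w (fun j => if (j : ℕ) = 0 then p else 0) =
      det ((gfpMatrix (n + 1) w z).updateCol 0 fun i => gfp w (z i) (n + p)) := by
  rw [dnum]
  congr 1
  ext i j
  by_cases hj : (j : ℕ) = 0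
  · simp only [of_apply, updateCol_apply, Fin.ext_iff, Fin.val_zero, hj, if_true]
    congr 1
    omega
  · simp only [of_apply, updateCol_apply, Fin.ext_iff, Fin.val_zero, hj, if_false, zero_add,
      gfpMatrix]

lemma gfpMatrix_updateCol_zero (n : ℕ) (w : ℤ → R) (z : Fin (n + 1) → R) :
    (gfpMatrix (n + 1) w z).updateCol 0 (fun i => gfp w (z i) n) = gfpMatrix (n + 1) w z := by
  convert updateCol_eq_self (gfpMatrix (n + 1) w z) 0 using 2
  simp [gfpMatrix]

lemma det_gfpMatrix_updateCol_gfp_of_lt {n k : ℕ} (hk : k < n) (w : ℤ → R)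
    (z : Fin (n + 1) → R) :
    det ((gfpMatrix (n + 1) w z).updateCol 0 fun i => gfp w (z i) k) = 0 := by
  convert det_updateCol_eq_zero (M := gfpMatrix (n + 1) w z) (i := ⟨n - k, by omega⟩) (j := 0)
    (by simp [Fin.ext_iff]; omega) using 4 with i
  simp only [gfpMatrix, of_apply]
  congr 1
  omega

lemma det_gfpDivDiff_eq_det_gfpMatrix_updateCol (n : ℕ) (w : ℤ → R) (b : R)
    (z : Fin (n + 1) → R) (d : R → R) :
    det (of fun i j => if j = 0 then d (z i) else gfpDivDiff w b (n + 1 - j) (z i)) =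
      det ((gfpMatrix (n + 1) w z).updateCol 0 fun i => d (z i)) := by
  -- column `j ≠ 0` on the left is the column `(·|w)^(n - j)` plus a multiple of column `j + 1`
  refine det_eq_of_forall_col_eq_smul_add_succ
    (fun j => if (j : ℕ) = 0 then 0 else b - w ((n - j : ℕ) + 1)) (fun i => ?_) (fun i j => ?_)
  · by_cases hn : n = 0
    · subst hn
      simp only [of_apply, updateCol_apply, Fin.last_zero, if_true]
    · simp only [of_apply, updateCol_apply, Fin.ext_iff, Fin.val_last, Fin.val_zero, hn,
        if_false, gfpMatrix]
      rw [show n + 1 - n = 0 + 1 by omega, gfpDivDiff, gfpDivDiff]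
      simp
  · by_cases hj : (j : ℕ) = 0
    · simp only [of_apply, updateCol_apply, Fin.ext_iff, Fin.val_castSucc, Fin.val_zero, hj,
        if_true, zero_mul, add_zero]
    · simp only [of_apply, updateCol_apply, Fin.ext_iff, Fin.val_castSucc, Fin.val_succ, hj,
        gfpMatrix, Fin.val_zero, if_false, Nat.succ_ne_zero]
      rw [show n + 1 - (j : ℕ) = n - j + 1 by omega, gfpDivDiff,
        show n + 1 - (j + 1) = n - j by omega]

lemma det_gfpMatrix_updateCol_succ (n : ℕ) (w : ℤ → R) (z : Fin (n + 2) → R) (g d : R → R)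
    (hd : ∀ a, g a - g (z (Fin.last _)) = (a - z (Fin.last _)) * d a) :
    det ((gfpMatrix (n + 2) w z).updateCol 0 fun i => g (z i)) =
      (∏ i, (Fin.init z i - z (Fin.last _))) *
        det ((gfpMatrix (n + 1) w (Fin.init z)).updateCol 0 fun i => d (Fin.init z i)) := by
  rw [← det_gfpDivDiff_eq_det_gfpMatrix_updateCol n w _ (Fin.init z) d,
    ← det_eq_prod_sub_mul_det_divDiff z (fun j a => if j = 0 then g a else gfp w a (n + 1 - j))
      (fun j a => if j = 0 then d a else gfpDivDiff w (z (Fin.last _)) (n + 1 - j) a)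
      (fun a => by simp) fun j a => ?_]
  · congr 1
    ext i j
    by_cases hj : j = 0 <;> simp [gfpMatrix, hj]
  · by_cases hj : j = 0
    · simpa [hj] using hd a
    · simp [hj, gfp_sub_gfp, Fin.ext_iff]

lemma det_gfpMatrix_updateCol_gfp_eq_sum (n p : ℕ) (w : ℤ → R) (z : Fin (n + 2) → R) :
    det ((gfpMatrix (n + 2) w z).updateCol 0 fun i => gfp w (z i) (n + 1 + p)) =
      (∏ i, (Fin.init z i - z (Fin.last _))) *
        ∑ q ∈ range (p + 1), gfp (fun t => w (t + (n + 1 + q : ℕ))) (z (Fin.last _)) (p - q) *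
          det ((gfpMatrix (n + 1) w (Fin.init z)).updateCol 0
            fun i => gfp w (Fin.init z i) (n + q)) := by
  rw [det_gfpMatrix_updateCol_succ n w z _ _ fun a => gfp_sub_gfp w a _ _]
  congr 1
  have hcol : (fun i => gfpDivDiff w (z (Fin.last _)) (n + 1 + p) (Fin.init z i)) =
      ∑ k ∈ range (n + (p + 1)),
        gfp (fun t => w (t + (k + 1 : ℕ))) (z (Fin.last _)) (n + p - k) •
          fun i => gfp w (Fin.init z i) k := by
    ext i
    rw [show n + 1 + p = n + (p + 1) by ring, gfpDivDiff_eq_sum, Finset.sum_apply]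
    refine sum_congr rfl fun k _ => ?_
    simp
  rw [hcol, det_updateCol_sum_smul, sum_range_add, sum_eq_zero, zero_add]
  · refine sum_congr rfl fun q _ => ?_
    rw [show n + p - (n + q) = p - q by omega, add_assoc, add_comm q 1, ← add_assoc]
  · exact fun k hk => mul_eq_zero_of_right _
      (det_gfpMatrix_updateCol_gfp_of_lt (mem_range.1 hk) w (Fin.init z))

theorem det_gfpMatrix_updateCol_eq_dh_mul (n p : ℕ) (w : ℤ → R) (z : Fin (n + 1) → R) :
    det ((gfpMatrix (n + 1) w z).updateCol 0 fun i => gfp w (z i) (n + p)) =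
      dh (n + 1) p z w * det (gfpMatrix (n + 1) w z) := by
  induction n generalizing p with
  | zero => simp [gfpMatrix, dh_one_left]
  | succ n ih =>
    have hden := det_gfpMatrix_updateCol_gfp_eq_sum n 0 w z
    simp only [zero_add, add_zero, range_one, sum_singleton, Nat.sub_self, gfp_zero, one_mul,
      gfpMatrix_updateCol_zero] at hden
    rw [det_gfpMatrix_updateCol_gfp_eq_sum, dh_succ_eq_sum, hden, sum_mul, mul_sum]
    refine sum_congr rfl fun q _ => ?_
    rw [ih]
    ring

theorem dnum_oneRow_eq_dh_mul_dden (n p : ℕ) (z : Fin (n + 1) → R) (w : ℤ → R) :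
    dnum (n + 1) z w (fun j => if (j : ℕ) = 0 then p else 0) =
      dh (n + 1) p z w * dden (n + 1) z w := by
  rw [dnum_oneRow_eq_det_gfpMatrix_updateCol, dden_eq_det_gfpMatrix,
    det_gfpMatrix_updateCol_eq_dh_mul]

end

/-- for one-row partitions `λ = (p)`, the shifted double Schur function
equals the shifted complete homogeneous function:
`^n s*_{(p)}(x_1,…,x_n|y) = h_p(x_1+y_{-1},…,x_n+y_{-n} | τ^{n+1} y)` for all `p ≥ 0`
(written multiplicatively; `(τ^{n+1} y)_k = y_{k-n-1}`). -/
theorem sstar_one_row_eq_dh {R : Type*} [CommRing R] (n : ℕ) (hn : 0 < n) (p : ℕ)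
    (x : Fin n → R) (y : ℤ → R) :
    dnum n (fun i => x i + y (-((i : ℤ) + 1))) (fun k => y (k - (n + 1)))
        (fun j => if (j : ℕ) = 0 then p else 0) =
      dh n p (fun i => x i + y (-((i : ℤ) + 1))) (fun k => y (k - (n + 1))) *
        dden n (fun i => x i + y (-((i : ℤ) + 1))) (fun k => y (k - (n + 1))) := by
  obtain ⟨m, rfl⟩ : ∃ m, n = m + 1 := ⟨n - 1, by omega⟩
  exact dnum_oneRow_eq_dh_mul_dden m p _ _
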